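/- Define v_{TA} = inf { Σ_{a∈A} ω_a‖x − a‖_{p_A} + Σ_{b∈B} ω_b (‖x − y¹_b‖_{p_A} + ‖y¹_b − y²_b‖_{p_H} + ‖y²_b − b‖_{p_B}) : x ∈ ℝ^d with αᵀx ≤ β, and y¹_b, y²_b ∈ 𝓗 for all b ∈ B } and v_{TB} = inf { Σ_{b∈B} ω_b‖x − b‖_{p_B} + Σ_{a∈A} ω_a (‖x − y¹_a‖_{p_B} + ‖y¹_a − y²_a‖_{p_H} + ‖y²_a − a‖_{p_A}) : x ∈ ℝ^d with αᵀx ≥ β, and y¹_a, y²_a ∈ 𝓗 for all a ∈ A }. Then the optimal value of Problem (PT) equals min{v_{TA}, v_{TB}}; in particular, if x* is an optimal solution of (PT), then x* is the x-component of an optimal solution of the restricted problem achieving this minimum. -/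

import Mathlib

open scoped ENNReal BigOperators

/-!
For `x` in the closed halfspace `H_A`, the transit distance from `x` to each `b ∈ B` is a minimum
over gate pairs in `𝓗 × 𝓗`, since the path cost is continuous and coercive on that closed set.
Hence `f_t(x)` is the objective defining `v_{TA}` evaluated at `x` and optimal gates, and likewise
on `H_B` for `v_{TB}`. So `inf f_t = min {v_{TA}, v_{TB}}`, and a minimiser of `f_t` together with
its optimal gates attains this value.
-/

/-- The `ℓ_p` norm on `ℝ^d` for `p : ℝ≥0∞` (intended for `1 ≤ p ≤ ∞`). -/
noncomputable def lpNorm {d : ℕ} (p : ℝ≥0∞) (x : Fin d → ℝ) : ℝ :=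
  if p = ∞ then ⨆ k, |x k| else (∑ k, |x k| ^ p.toReal) ^ (1 / p.toReal)

/-- The transit distance (two gate points, traveling along the hyperplane with
norm `ℓ_{p_H}` allowed). -/
noncomputable def transDist {d : ℕ} (pA pB pH : ℝ≥0∞) (α : Fin d → ℝ) (β : ℝ)
    (x y : Fin d → ℝ) : ℝ :=
  if ∑ i, α i * x i ≤ β then
    (if ∑ i, α i * y i ≤ β then lpNorm pA (x - y)
     else ⨅ zw : {zw : (Fin d → ℝ) × (Fin d → ℝ) //
            (∑ i, α i * zw.1 i = β) ∧ (∑ i, α i * zw.2 i = β)},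
        lpNorm pA (zw.1.1 - x) + lpNorm pH (zw.1.1 - zw.1.2) + lpNorm pB (zw.1.2 - y))
  else
    (if ∑ i, α i * y i ≤ β then
       ⨅ zw : {zw : (Fin d → ℝ) × (Fin d → ℝ) //
            (∑ i, α i * zw.1 i = β) ∧ (∑ i, α i * zw.2 i = β)},
         lpNorm pA (zw.1.1 - y) + lpNorm pH (zw.1.1 - zw.1.2) + lpNorm pB (zw.1.2 - x)
     else lpNorm pB (x - y))

open Filter Topology

section lpNorm

variable {d : ℕ} {p : ℝ≥0∞}

theorem lpNorm_eq_norm_toLp (hp : 1 ≤ p) (x : Fin d → ℝ) :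
    lpNorm p x = ‖WithLp.toLp p x‖ := by
  have : Fact (1 ≤ p) := ⟨hp⟩
  by_cases h : p = ∞
  · subst h
    simp [lpNorm, PiLp.norm_eq_ciSup]
  · rw [lpNorm, if_neg h, PiLp.norm_eq_sum (ENNReal.toReal_pos (by positivity) h)]
    simp

theorem lpNorm_nonneg (hp : 1 ≤ p) (x : Fin d → ℝ) : 0 ≤ lpNorm p x := by
  have : Fact (1 ≤ p) := ⟨hp⟩
  rw [lpNorm_eq_norm_toLp hp]
  exact norm_nonneg _

theorem lpNorm_sub_comm (hp : 1 ≤ p) (x y : Fin d → ℝ) :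
    lpNorm p (x - y) = lpNorm p (y - x) := by
  have : Fact (1 ≤ p) := ⟨hp⟩
  simpa [lpNorm_eq_norm_toLp hp] using norm_sub_rev (WithLp.toLp p x) (WithLp.toLp p y)

theorem norm_le_lpNorm (hp : 1 ≤ p) (x : Fin d → ℝ) : ‖x‖ ≤ lpNorm p x := by
  have : Fact (1 ≤ p) := ⟨hp⟩
  rw [lpNorm_eq_norm_toLp hp]
  exact (pi_norm_le_iff_of_nonneg (norm_nonneg _)).2 fun i => by
    simpa using PiLp.norm_apply_le (WithLp.toLp p x) i

@[fun_prop]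
theorem Continuous.lpNorm {X : Type*} [TopologicalSpace X] {f : X → Fin d → ℝ}
    (hp : 1 ≤ p) (hf : Continuous f) : Continuous fun x => lpNorm p (f x) := by
  have : Fact (1 ≤ p) := ⟨hp⟩
  simp_rw [lpNorm_eq_norm_toLp hp]
  exact ((PiLp.continuous_toLp p _).comp hf).norm

end lpNorm

section Hyperplane

variable {d : ℕ} {α : Fin d → ℝ}

theorem exists_sum_mul_eq (hα : α ≠ 0) (β : ℝ) : ∃ x : Fin d → ℝ, ∑ i, α i * x i = β := by
  have hαα : α ⬝ᵥ α ≠ 0 := dotProduct_self_eq_zero.not.2 hα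
  refine ⟨(β / α ⬝ᵥ α) • α, ?_⟩
  change α ⬝ᵥ ((β / α ⬝ᵥ α) • α) = β
  rw [dotProduct_smul, smul_eq_mul, div_mul_cancel₀ _ hαα]

theorem setOf_le_sum_mul_subset_closure (hα : α ≠ 0) (β : ℝ) :
    {x : Fin d → ℝ | β ≤ ∑ i, α i * x i} ⊆ closure {x | β < ∑ i, α i * x i} := by
  intro x (hx : β ≤ α ⬝ᵥ x)
  have hαα : 0 < α ⬝ᵥ α := by
    simpa using Matrix.dotProduct_self_star_pos_iff.2 hα
  have hlim : Tendsto (fun t : ℝ => x + t • α) (𝓝[>] 0) (𝓝 x) := by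
    refine (Continuous.tendsto' ?_ 0 x (by simp)).mono_left nhdsWithin_le_nhds
    fun_prop
  refine mem_closure_of_tendsto hlim (eventually_nhdsWithin_of_forall fun t (ht : 0 < t) => ?_)
  change β < α ⬝ᵥ (x + t • α)
  rw [dotProduct_add, dotProduct_smul, smul_eq_mul]
  nlinarith

end Hyperplane

theorem ContinuousOn.exists_isMinOn_of_tendsto {X Y : Type*} [TopologicalSpace X]
    [TopologicalSpace Y] [LinearOrder Y] [ClosedIicTopology Y] {f : X → Y} {s : Set X}
    (hf : ContinuousOn f s) (hs : IsClosed s) (hne : s.Nonempty)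
    (hlim : Tendsto f (cocompact X) atTop) : ∃ x ∈ s, IsMinOn f s x := by
  obtain ⟨x₀, hx₀⟩ := hne
  exact hf.exists_isMinOn' hs hx₀ ((hlim.eventually_ge_atTop (f x₀)).filter_mono inf_le_left)

theorem ciInf_eq_min_csInf {ι X : Type*} [Nonempty ι] [ConditionallyCompleteLinearOrder X]
    {f : ι → X} {s t : Set X} (hs : s.Nonempty) (ht : t.Nonempty)
    (hs_le : ∀ v ∈ s, ⨅ i, f i ≤ v) (ht_le : ∀ v ∈ t, ⨅ i, f i ≤ v)
    (hmem : ∀ i, f i ∈ s ∨ f i ∈ t) : ⨅ i, f i = min (sInf s) (sInf t) := by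
  refine le_antisymm (le_min (le_csInf hs hs_le) (le_csInf ht ht_le)) (le_ciInf fun i => ?_)
  rcases hmem i with h | h
  · exact (min_le_left _ _).trans (csInf_le ⟨_, hs_le⟩ h)
  · exact (min_le_right _ _).trans (csInf_le ⟨_, ht_le⟩ h)

section Crossing

variable {d : ℕ} {p q r : ℝ≥0∞} {α : Fin d → ℝ} {β : ℝ}

def gatePairs (α : Fin d → ℝ) (β : ℝ) : Set ((Fin d → ℝ) × (Fin d → ℝ)) :=
  {zw | ∑ i, α i * zw.1 i = β ∧ ∑ i, α i * zw.2 i = β}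

noncomputable def pathCost (p q r : ℝ≥0∞) (u v : Fin d → ℝ) (zw : (Fin d → ℝ) × (Fin d → ℝ)) :
    ℝ :=
  lpNorm p (u - zw.1) + lpNorm r (zw.1 - zw.2) + lpNorm q (zw.2 - v)

noncomputable def crossingDist (p q r : ℝ≥0∞) (α : Fin d → ℝ) (β : ℝ) (u v : Fin d → ℝ) : ℝ :=
  ⨅ zw : gatePairs α β, pathCost p q r u v zw

theorem isClosed_gatePairs : IsClosed (gatePairs α β) :=
  (isClosed_eq (by fun_prop) continuous_const).inter (isClosed_eq (by fun_prop) continuous_const)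

theorem gatePairs_nonempty (hα : α ≠ 0) : (gatePairs α β).Nonempty := by
  obtain ⟨x, hx⟩ := exists_sum_mul_eq hα β
  exact ⟨(x, x), hx, hx⟩

theorem pathCost_nonneg (hp : 1 ≤ p) (hq : 1 ≤ q) (hr : 1 ≤ r) (u v : Fin d → ℝ)
    (zw : (Fin d → ℝ) × (Fin d → ℝ)) : 0 ≤ pathCost p q r u v zw := by
  unfold pathCost
  have := lpNorm_nonneg hp (u - zw.1)
  have := lpNorm_nonneg hr (zw.1 - zw.2)
  have := lpNorm_nonneg hq (zw.2 - v)
  linarith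

theorem continuous_pathCost (hp : 1 ≤ p) (hq : 1 ≤ q) (hr : 1 ≤ r) (u v : Fin d → ℝ) :
    Continuous (pathCost p q r u v) := by
  unfold pathCost
  fun_prop (disch := assumption)

theorem tendsto_pathCost_cocompact (hp : 1 ≤ p) (hq : 1 ≤ q) (hr : 1 ≤ r) (u v : Fin d → ℝ) :
    Tendsto (pathCost p q r u v) (cocompact _) atTop := by
  rw [← Metric.cobounded_eq_cocompact]
  refine tendsto_atTop_mono (fun zw => ?_)
    (tendsto_atTop_add_const_right _ (-(‖u‖ + ‖v‖)) tendsto_norm_cobounded_atTop)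
  have h₁ : ‖zw.1‖ ≤ ‖u - zw.1‖ + ‖u‖ := norm_sub_rev zw.1 u ▸ norm_le_norm_sub_add zw.1 u
  have h₂ : ‖zw.2‖ ≤ ‖zw.2 - v‖ + ‖v‖ := norm_le_norm_sub_add zw.2 v
  calc ‖zw‖ + -(‖u‖ + ‖v‖) ≤ ‖zw.1‖ + ‖zw.2‖ - (‖u‖ + ‖v‖) := by
        rw [Prod.norm_def]
        linarith [max_le_add_of_nonneg (norm_nonneg zw.1) (norm_nonneg zw.2)]
    _ ≤ ‖u - zw.1‖ + ‖zw.2 - v‖ := by linarith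
    _ ≤ pathCost p q r u v zw := by
        unfold pathCost
        linarith [norm_le_lpNorm hp (u - zw.1), norm_le_lpNorm hq (zw.2 - v),
          lpNorm_nonneg hr (zw.1 - zw.2)]

theorem crossingDist_le_pathCost (hp : 1 ≤ p) (hq : 1 ≤ q) (hr : 1 ≤ r) (u v : Fin d → ℝ)
    {zw : (Fin d → ℝ) × (Fin d → ℝ)} (hzw : zw ∈ gatePairs α β) :
    crossingDist p q r α β u v ≤ pathCost p q r u v zw :=
  ciInf_le (f := fun zw : gatePairs α β => pathCost p q r u v zw)
    ⟨0, by rintro _ ⟨zw, rfl⟩; exact pathCost_nonneg hp hq hr u v zw⟩ ⟨zw, hzw⟩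

theorem exists_pathCost_eq_crossingDist (hp : 1 ≤ p) (hq : 1 ≤ q) (hr : 1 ≤ r) (hα : α ≠ 0)
    (u v : Fin d → ℝ) :
    ∃ zw ∈ gatePairs α β, pathCost p q r u v zw = crossingDist p q r α β u v := by
  obtain ⟨zw, hzw, hmin⟩ :=
    (continuous_pathCost hp hq hr u v).continuousOn.exists_isMinOn_of_tendsto
      isClosed_gatePairs (gatePairs_nonempty hα) (tendsto_pathCost_cocompact hp hq hr u v)
  exact ⟨zw, hzw, (hmin.iInf_eq hzw).symm⟩

theorem crossingDist_nonneg (hp : 1 ≤ p) (hq : 1 ≤ q) (hr : 1 ≤ r) (u v : Fin d → ℝ) :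
    0 ≤ crossingDist p q r α β u v :=
  Real.iInf_nonneg fun zw => pathCost_nonneg hp hq hr u v zw

theorem crossingDist_comm (hp : 1 ≤ p) (hq : 1 ≤ q) (hr : 1 ≤ r) (u v : Fin d → ℝ) :
    crossingDist p q r α β u v = crossingDist q p r α β v u := by
  let swap : gatePairs α β ≃ gatePairs α β :=
    ⟨fun zw => ⟨zw.1.swap, zw.2.2, zw.2.1⟩, fun zw => ⟨zw.1.swap, zw.2.2, zw.2.1⟩,
      fun _ => rfl, fun _ => rfl⟩
  refine (swap.iInf_congr fun zw => ?_).symm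
  simp only [pathCost, swap, Equiv.coe_fn_mk, Prod.fst_swap, Prod.snd_swap]
  rw [lpNorm_sub_comm hq, lpNorm_sub_comm hr, lpNorm_sub_comm hp]
  ring

end Crossing

section TransDist

variable {d : ℕ} {pA pB pH : ℝ≥0∞} {α : Fin d → ℝ} {β : ℝ} {x y : Fin d → ℝ}

theorem transDist_of_le_of_le (hx : ∑ i, α i * x i ≤ β) (hy : ∑ i, α i * y i ≤ β) :
    transDist pA pB pH α β x y = lpNorm pA (x - y) := by
  rw [transDist, if_pos hx, if_pos hy]

theorem transDist_of_lt_of_lt (hx : β < ∑ i, α i * x i) (hy : β < ∑ i, α i * y i) :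
    transDist pA pB pH α β x y = lpNorm pB (x - y) := by
  rw [transDist, if_neg hx.not_ge, if_neg hy.not_ge]

theorem transDist_of_le_of_lt (hpA : 1 ≤ pA) (hx : ∑ i, α i * x i ≤ β)
    (hy : β < ∑ i, α i * y i) : transDist pA pB pH α β x y = crossingDist pA pB pH α β x y := by
  rw [transDist, if_pos hx, if_neg hy.not_ge]
  exact iInf_congr fun zw => by rw [pathCost, lpNorm_sub_comm hpA]

theorem transDist_of_lt_of_le (hpA : 1 ≤ pA) (hpB : 1 ≤ pB) (hpH : 1 ≤ pH)
    (hx : β < ∑ i, α i * x i) (hy : ∑ i, α i * y i ≤ β) :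
    transDist pA pB pH α β x y = crossingDist pB pA pH α β x y := by
  rw [transDist, if_neg hx.not_ge, if_pos hy, crossingDist_comm hpB hpA hpH]
  exact iInf_congr fun zw => by rw [pathCost, lpNorm_sub_comm hpA]

theorem transDist_nonneg (hpA : 1 ≤ pA) (hpB : 1 ≤ pB) (hpH : 1 ≤ pH) (x y : Fin d → ℝ) :
    0 ≤ transDist pA pB pH α β x y := by
  rcases le_or_gt (∑ i, α i * x i) β with hx | hx <;>
    rcases le_or_gt (∑ i, α i * y i) β with hy | hy
  · exact (transDist_of_le_of_le hx hy).symm ▸ lpNorm_nonneg hpA _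
  · exact (transDist_of_le_of_lt hpA hx hy).symm ▸ crossingDist_nonneg hpA hpB hpH _ _
  · exact (transDist_of_lt_of_le hpA hpB hpH hx hy).symm ▸ crossingDist_nonneg hpB hpA hpH _ _
  · exact (transDist_of_lt_of_lt hx hy).symm ▸ lpNorm_nonneg hpB _

end TransDist

section Costs

variable {d : ℕ} (p q r : ℝ≥0∞) (α : Fin d → ℝ) (β : ℝ) (S T : Finset (Fin d → ℝ))
  (ω : (Fin d → ℝ) → ℝ)

noncomputable def sideCost (x : Fin d → ℝ) : ℝ :=
  (∑ s ∈ S, ω s * lpNorm p (x - s)) + ∑ t ∈ T, ω t * crossingDist p q r α β x t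

/-- With `(p, q, S, T) = (p_A, p_B, A, B)` this is the objective defining `v_{TA}`, with
`(p_B, p_A, B, A)` the one defining `v_{TB}`. -/
noncomputable def restrictedCost (x : Fin d → ℝ) (y₁ y₂ : (Fin d → ℝ) → Fin d → ℝ) : ℝ :=
  (∑ s ∈ S, ω s * lpNorm p (x - s)) +
    ∑ t ∈ T, ω t * (lpNorm p (x - y₁ t) + lpNorm r (y₁ t - y₂ t) + lpNorm q (y₂ t - t))

variable {p q r α β S T ω}

theorem sideCost_le_restrictedCost (hp : 1 ≤ p) (hq : 1 ≤ q) (hr : 1 ≤ r)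
    (hω : ∀ t ∈ T, 0 ≤ ω t) {x : Fin d → ℝ} {y₁ y₂ : (Fin d → ℝ) → Fin d → ℝ}
    (hy₁ : ∀ t ∈ T, ∑ i, α i * y₁ t i = β) (hy₂ : ∀ t ∈ T, ∑ i, α i * y₂ t i = β) :
    sideCost p q r α β S T ω x ≤ restrictedCost p q r S T ω x y₁ y₂ := by
  unfold sideCost restrictedCost
  gcongr with t ht
  · exact hω t ht
  · exact crossingDist_le_pathCost hp hq hr x t (zw := (y₁ t, y₂ t)) ⟨hy₁ t ht, hy₂ t ht⟩

theorem exists_restrictedCost_eq_sideCost (hp : 1 ≤ p) (hq : 1 ≤ q) (hr : 1 ≤ r) (hα : α ≠ 0)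
    (x : Fin d → ℝ) :
    ∃ y₁ y₂ : (Fin d → ℝ) → Fin d → ℝ,
      (∀ t ∈ T, ∑ i, α i * y₁ t i = β) ∧ (∀ t ∈ T, ∑ i, α i * y₂ t i = β) ∧
      restrictedCost p q r S T ω x y₁ y₂ = sideCost p q r α β S T ω x := by
  choose y hy hcost using fun t => exists_pathCost_eq_crossingDist hp hq hr hα (β := β) x t
  refine ⟨fun t => (y t).1, fun t => (y t).2, fun t _ => (hy t).1, fun t _ => (hy t).2, ?_⟩
  exact congrArg _ (Finset.sum_congr rfl fun t _ => congrArg _ (hcost t))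

theorem continuous_restrictedCost (hp : 1 ≤ p) (y₁ y₂ : (Fin d → ℝ) → Fin d → ℝ) :
    Continuous fun x => restrictedCost p q r S T ω x y₁ y₂ := by
  unfold restrictedCost
  fun_prop (disch := assumption)

end Costs

section TransitCost

variable {d : ℕ} {pA pB pH : ℝ≥0∞} {α : Fin d → ℝ} {β : ℝ} {A B : Finset (Fin d → ℝ)}
  {ω : (Fin d → ℝ) → ℝ}

variable (pA pB pH α β A B ω) in
noncomputable def transitCost (x : Fin d → ℝ) : ℝ :=
  (∑ a ∈ A, ω a * transDist pA pB pH α β x a) + ∑ b ∈ B, ω b * transDist pA pB pH α β x b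

theorem transitCost_eq_sideCost_of_le (hpA : 1 ≤ pA) (hAH : ∀ a ∈ A, ∑ i, α i * a i ≤ β)
    (hBH : ∀ b ∈ B, β < ∑ i, α i * b i) {x : Fin d → ℝ} (hx : ∑ i, α i * x i ≤ β) :
    transitCost pA pB pH α β A B ω x = sideCost pA pB pH α β A B ω x := by
  unfold transitCost sideCost
  congr 1
  · exact Finset.sum_congr rfl fun a ha => by rw [transDist_of_le_of_le hx (hAH a ha)]
  · exact Finset.sum_congr rfl fun b hb => by rw [transDist_of_le_of_lt hpA hx (hBH b hb)]

theorem transitCost_eq_sideCost_of_lt (hpA : 1 ≤ pA) (hpB : 1 ≤ pB) (hpH : 1 ≤ pH)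
    (hAH : ∀ a ∈ A, ∑ i, α i * a i ≤ β) (hBH : ∀ b ∈ B, β < ∑ i, α i * b i)
    {x : Fin d → ℝ} (hx : β < ∑ i, α i * x i) :
    transitCost pA pB pH α β A B ω x = sideCost pB pA pH α β B A ω x := by
  unfold transitCost sideCost
  rw [add_comm]
  congr 1
  · exact Finset.sum_congr rfl fun b hb => by rw [transDist_of_lt_of_lt hx (hBH b hb)]
  · exact Finset.sum_congr rfl fun a ha => by
      rw [transDist_of_lt_of_le hpA hpB hpH hx (hAH a ha)]

theorem exists_restrictedCost_eq_transitCost_of_le (hpA : 1 ≤ pA) (hpB : 1 ≤ pB)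
    (hpH : 1 ≤ pH) (hα : α ≠ 0) (hAH : ∀ a ∈ A, ∑ i, α i * a i ≤ β)
    (hBH : ∀ b ∈ B, β < ∑ i, α i * b i) {x : Fin d → ℝ} (hx : ∑ i, α i * x i ≤ β) :
    ∃ y₁ y₂ : (Fin d → ℝ) → Fin d → ℝ,
      (∀ b ∈ B, ∑ i, α i * y₁ b i = β) ∧ (∀ b ∈ B, ∑ i, α i * y₂ b i = β) ∧
      restrictedCost pA pB pH A B ω x y₁ y₂ = transitCost pA pB pH α β A B ω x :=
  transitCost_eq_sideCost_of_le hpA hAH hBH hx ▸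
    exists_restrictedCost_eq_sideCost hpA hpB hpH hα x

theorem exists_restrictedCost_eq_transitCost_of_lt (hpA : 1 ≤ pA) (hpB : 1 ≤ pB)
    (hpH : 1 ≤ pH) (hα : α ≠ 0) (hAH : ∀ a ∈ A, ∑ i, α i * a i ≤ β)
    (hBH : ∀ b ∈ B, β < ∑ i, α i * b i) {x : Fin d → ℝ} (hx : β < ∑ i, α i * x i) :
    ∃ y₁ y₂ : (Fin d → ℝ) → Fin d → ℝ,
      (∀ a ∈ A, ∑ i, α i * y₁ a i = β) ∧ (∀ a ∈ A, ∑ i, α i * y₂ a i = β) ∧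
      restrictedCost pB pA pH B A ω x y₁ y₂ = transitCost pA pB pH α β A B ω x :=
  transitCost_eq_sideCost_of_lt hpA hpB hpH hAH hBH hx ▸
    exists_restrictedCost_eq_sideCost hpB hpA hpH hα x

theorem bddBelow_range_transitCost (hpA : 1 ≤ pA) (hpB : 1 ≤ pB) (hpH : 1 ≤ pH)
    (hωA : ∀ a ∈ A, 0 < ω a) (hωB : ∀ b ∈ B, 0 < ω b) :
    BddBelow (Set.range (transitCost pA pB pH α β A B ω)) := by
  refine ⟨0, ?_⟩
  rintro _ ⟨x, rfl⟩
  unfold transitCost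
  have hnonneg := transDist_nonneg hpA hpB hpH (α := α) (β := β) x
  exact add_nonneg (Finset.sum_nonneg fun a ha => mul_nonneg (hωA a ha).le (hnonneg a))
    (Finset.sum_nonneg fun b hb => mul_nonneg (hωB b hb).le (hnonneg b))

theorem iInf_transitCost_le_restrictedCost_of_le (hpA : 1 ≤ pA) (hpB : 1 ≤ pB) (hpH : 1 ≤ pH)
    (hAH : ∀ a ∈ A, ∑ i, α i * a i ≤ β) (hBH : ∀ b ∈ B, β < ∑ i, α i * b i)
    (hωA : ∀ a ∈ A, 0 < ω a) (hωB : ∀ b ∈ B, 0 < ω b) {x : Fin d → ℝ}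
    (hx : ∑ i, α i * x i ≤ β) {y₁ y₂ : (Fin d → ℝ) → Fin d → ℝ}
    (hy₁ : ∀ b ∈ B, ∑ i, α i * y₁ b i = β) (hy₂ : ∀ b ∈ B, ∑ i, α i * y₂ b i = β) :
    ⨅ z, transitCost pA pB pH α β A B ω z ≤ restrictedCost pA pB pH A B ω x y₁ y₂ :=
  calc ⨅ z, transitCost pA pB pH α β A B ω z
      ≤ transitCost pA pB pH α β A B ω x :=
        ciInf_le (bddBelow_range_transitCost hpA hpB hpH hωA hωB) x
    _ = sideCost pA pB pH α β A B ω x := transitCost_eq_sideCost_of_le hpA hAH hBH hx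
    _ ≤ restrictedCost pA pB pH A B ω x y₁ y₂ :=
        sideCost_le_restrictedCost hpA hpB hpH (fun b hb => (hωB b hb).le) hy₁ hy₂

/-- Points on `𝓗` itself are evaluated by `transDist` as lying on the `A` side, so the bound on
the closed `B` side is obtained by approaching `𝓗` from the open halfspace `H_B`. -/
theorem iInf_transitCost_le_restrictedCost_of_ge (hpA : 1 ≤ pA) (hpB : 1 ≤ pB) (hpH : 1 ≤ pH)
    (hα : α ≠ 0) (hAH : ∀ a ∈ A, ∑ i, α i * a i ≤ β) (hBH : ∀ b ∈ B, β < ∑ i, α i * b i)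
    (hωA : ∀ a ∈ A, 0 < ω a) (hωB : ∀ b ∈ B, 0 < ω b) {x : Fin d → ℝ}
    (hx : β ≤ ∑ i, α i * x i) {y₁ y₂ : (Fin d → ℝ) → Fin d → ℝ}
    (hy₁ : ∀ a ∈ A, ∑ i, α i * y₁ a i = β) (hy₂ : ∀ a ∈ A, ∑ i, α i * y₂ a i = β) :
    ⨅ z, transitCost pA pB pH α β A B ω z ≤ restrictedCost pB pA pH B A ω x y₁ y₂ := by
  have hclosed : IsClosed {z | ⨅ z, transitCost pA pB pH α β A B ω z ≤
      restrictedCost pB pA pH B A ω z y₁ y₂} :=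
    isClosed_le continuous_const (continuous_restrictedCost hpB y₁ y₂)
  refine hclosed.closure_subset_iff.2 (fun z (hz : β < ∑ i, α i * z i) => ?_)
    (setOf_le_sum_mul_subset_closure hα β hx)
  calc ⨅ z, transitCost pA pB pH α β A B ω z
      ≤ transitCost pA pB pH α β A B ω z :=
        ciInf_le (bddBelow_range_transitCost hpA hpB hpH hωA hωB) z
    _ = sideCost pB pA pH α β B A ω z := transitCost_eq_sideCost_of_lt hpA hpB hpH hAH hBH hz
    _ ≤ restrictedCost pB pA pH B A ω z y₁ y₂ :=
        sideCost_le_restrictedCost hpB hpA hpH (fun a ha => (hωA a ha).le) hy₁ hy₂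

end TransitCost

/-- Theorem: the optimal value of problem (PT) equals `min {v_{TA}, v_{TB}}`,
where `v_{TA}` (resp. `v_{TB}`) is the optimal value of the restricted problem
(PT_A) (resp. (PT_B)); in particular, an optimal solution `x*` of (PT) is the
`x`-component of an optimal solution of the restricted problem achieving the
minimum. -/
theorem stmt_16 {d : ℕ} (pA pB pH : ℝ≥0∞)
    (hpA : 1 ≤ pA) (hpB : 1 ≤ pB) (hpH : 1 ≤ pH)
    (α : Fin d → ℝ) (hα : α ≠ 0) (β : ℝ)
    (A B : Finset (Fin d → ℝ))
    (hAH : ∀ a ∈ A, ∑ i, α i * a i ≤ β) (hBH : ∀ b ∈ B, β < ∑ i, α i * b i)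
    (ω : (Fin d → ℝ) → ℝ) (hωA : ∀ a ∈ A, 0 < ω a) (hωB : ∀ b ∈ B, 0 < ω b)
    (vTA vTB : ℝ)
    (hvTA : vTA = sInf {v : ℝ | ∃ (x : Fin d → ℝ)
        (y1 y2 : (Fin d → ℝ) → Fin d → ℝ),
        (∑ i, α i * x i ≤ β) ∧
        (∀ b ∈ B, ∑ i, α i * y1 b i = β) ∧ (∀ b ∈ B, ∑ i, α i * y2 b i = β) ∧
        v = (∑ a ∈ A, ω a * lpNorm pA (x - a)) +
          ∑ b ∈ B, ω b * (lpNorm pA (x - y1 b) + lpNorm pH (y1 b - y2 b) +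
            lpNorm pB (y2 b - b))})
    (hvTB : vTB = sInf {v : ℝ | ∃ (x : Fin d → ℝ)
        (y1 y2 : (Fin d → ℝ) → Fin d → ℝ),
        (β ≤ ∑ i, α i * x i) ∧
        (∀ a ∈ A, ∑ i, α i * y1 a i = β) ∧ (∀ a ∈ A, ∑ i, α i * y2 a i = β) ∧
        v = (∑ b ∈ B, ω b * lpNorm pB (x - b)) +
          ∑ a ∈ A, ω a * (lpNorm pB (x - y1 a) + lpNorm pH (y1 a - y2 a) +
            lpNorm pA (y2 a - a))}) :
    (⨅ x : Fin d → ℝ,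
        ((∑ a ∈ A, ω a * transDist pA pB pH α β x a) +
          ∑ b ∈ B, ω b * transDist pA pB pH α β x b)) = min vTA vTB ∧
    ∀ x : Fin d → ℝ,
      (∀ y : Fin d → ℝ,
        (∑ a ∈ A, ω a * transDist pA pB pH α β x a) +
            ∑ b ∈ B, ω b * transDist pA pB pH α β x b ≤
          (∑ a ∈ A, ω a * transDist pA pB pH α β y a) +
            ∑ b ∈ B, ω b * transDist pA pB pH α β y b) →
      ((∑ i, α i * x i ≤ β ∧
          ∃ y1 y2 : (Fin d → ℝ) → Fin d → ℝ,
            (∀ b ∈ B, ∑ i, α i * y1 b i = β) ∧ (∀ b ∈ B, ∑ i, α i * y2 b i = β) ∧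
            (∑ a ∈ A, ω a * lpNorm pA (x - a)) +
              (∑ b ∈ B, ω b * (lpNorm pA (x - y1 b) + lpNorm pH (y1 b - y2 b) +
                lpNorm pB (y2 b - b))) = min vTA vTB) ∨
        (β ≤ ∑ i, α i * x i ∧
          ∃ y1 y2 : (Fin d → ℝ) → Fin d → ℝ,
            (∀ a ∈ A, ∑ i, α i * y1 a i = β) ∧ (∀ a ∈ A, ∑ i, α i * y2 a i = β) ∧
            (∑ b ∈ B, ω b * lpNorm pB (x - b)) +
              (∑ a ∈ A, ω a * (lpNorm pB (x - y1 a) + lpNorm pH (y1 a - y2 a) +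
                lpNorm pA (y2 a - a))) = min vTA vTB)) := by
  change (⨅ x, transitCost pA pB pH α β A B ω x) = _ ∧
    ∀ x, (∀ y, transitCost pA pB pH α β A B ω x ≤ transitCost pA pB pH α β A B ω y) → _
  obtain ⟨x₀, hx₀⟩ := exists_sum_mul_eq hα β
  have hsideA {x : Fin d → ℝ} (hx : ∑ i, α i * x i ≤ β) :=
    exists_restrictedCost_eq_transitCost_of_le (ω := ω) hpA hpB hpH hα hAH hBH hx
  have hsideB {x : Fin d → ℝ} (hx : β < ∑ i, α i * x i) :=
    exists_restrictedCost_eq_transitCost_of_lt (ω := ω) hpA hpB hpH hα hAH hBH hx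
  have hval : ⨅ x, transitCost pA pB pH α β A B ω x = min vTA vTB := by
    rw [hvTA, hvTB]
    refine ciInf_eq_min_csInf ⟨_, x₀, fun _ => x₀, fun _ => x₀, hx₀.le, fun _ _ => hx₀,
        fun _ _ => hx₀, rfl⟩ ⟨_, x₀, fun _ => x₀, fun _ => x₀, hx₀.ge, fun _ _ => hx₀,
        fun _ _ => hx₀, rfl⟩ ?_ ?_ fun x => ?_
    · rintro _ ⟨x, y1, y2, hx, hy1, hy2, rfl⟩
      exact iInf_transitCost_le_restrictedCost_of_le hpA hpB hpH hAH hBH hωA hωB hx hy1 hy2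
    · rintro _ ⟨x, y1, y2, hx, hy1, hy2, rfl⟩
      exact iInf_transitCost_le_restrictedCost_of_ge hpA hpB hpH hα hAH hBH hωA hωB hx hy1 hy2
    · rcases le_or_gt (∑ i, α i * x i) β with hx | hx
      · obtain ⟨y1, y2, hy1, hy2, hcost⟩ := hsideA hx
        exact .inl ⟨x, y1, y2, hx, hy1, hy2, hcost.symm⟩
      · obtain ⟨y1, y2, hy1, hy2, hcost⟩ := hsideB hx
        exact .inr ⟨x, y1, y2, hx.le, hy1, hy2, hcost.symm⟩
  refine ⟨hval, fun x hmin => ?_⟩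
  have hx_val : transitCost pA pB pH α β A B ω x = min vTA vTB := hval ▸ le_antisymm
    (le_ciInf hmin) (ciInf_le (bddBelow_range_transitCost hpA hpB hpH hωA hωB) x)
  rcases le_or_gt (∑ i, α i * x i) β with hx | hx
  · obtain ⟨y1, y2, hy1, hy2, hcost⟩ := hsideA hx
    exact .inl ⟨hx, y1, y2, hy1, hy2, hcost.trans hx_val⟩
  · obtain ⟨y1, y2, hy1, hy2, hcost⟩ := hsideB hx
    exact .inr ⟨hx.le, y1, y2, hy1, hy2, hcost.trans hx_val⟩
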